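/- arXiv:1510.03076 — 2 statements merged into one kernel-verified Lean document; each statement's English description precedes it below -/
import Mathlib

section
/- If the symmetric bilinear form B on V is nondegenerate, then the loop-space form Ω is nondegenerate: if f ∈ K satisfies Ω(f, g) = 0 for all g ∈ K, then f = 0. -/
/-!
Put `p_g := B_q(f(q⁻¹), g)`. Computing the two residues gives
`Ω(f, g) = c₀(p_g(q⁻¹)) - c₀(p_g)`, with `c₀` the constant Laurent coefficient at `q = 0`;
for `p_g = (1 - q)⁻¹` this is `-1`. If `c := B_q(f, 1 ⊗ w)` were nonzero, then
`g := c(q⁻¹)⁻¹ (1 - q)⁻¹ ⊗ w` would have `p_g = (1 - q)⁻¹`. Hence `B_q(f, 1 ⊗ w) = 0` for all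
`w`. Its Laurent coefficients are `B(fₙ, w)`, where `fₙ` are those of `f`, so nondegeneracy of
`B` kills every `fₙ`, and `f = 0`.
-/

open Polynomial in
theorem algebraMap_ratFunc_eq_aeval (F : Type*) [Field F] (p : F[X]) :
    algebraMap F[X] (RatFunc F) p = Polynomial.aeval RatFunc.X p := by
  have h : (IsScalarTower.toAlgHom F F[X] (RatFunc F)) = Polynomial.aeval (RatFunc.X (K := F)) :=
    Polynomial.algHom_ext (by simp [RatFunc.algebraMap_X])
  exact DFunLike.congr_fun h p

open Polynomial in
/-- Injectivity of `aeval X⁻¹ : F[X] → F(q)`. -/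
theorem aeval_inv_injective (F : Type*) [Field F] :
    Function.Injective (Polynomial.aeval (RatFunc.X (K := F))⁻¹ : F[X] →ₐ[F] RatFunc F) := by
  rw [injective_iff_map_eq_zero]
  intro p hp
  haveI : Invertible (RatFunc.X (K := F))⁻¹ :=
    invertibleOfNonzero (inv_ne_zero RatFunc.X_ne_zero)
  have h2 : (⅟(RatFunc.X (K := F))⁻¹) = RatFunc.X := by
    rw [invOf_eq_inv, inv_inv]
  have hp' : Polynomial.eval₂ (algebraMap F (RatFunc F)) (RatFunc.X)⁻¹ p = 0 := by
    rwa [Polynomial.aeval_def] at hp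
  rw [← Polynomial.eval₂_reverse_eq_zero_iff (algebraMap F (RatFunc F)) (RatFunc.X)⁻¹ p] at hp'
  rw [h2] at hp'
  have h3 : algebraMap F[X] (RatFunc F) p.reverse = 0 := by
    rw [algebraMap_ratFunc_eq_aeval, Polynomial.aeval_def]
    exact hp'
  have h4 : p.reverse = 0 := RatFunc.algebraMap_injective F (by simpa using h3)
  exact Polynomial.reverse_eq_zero.mp h4

noncomputable section

open scoped TensorProduct

variable (F : Type*) [Field F]

/-- The automorphism `q ↦ q⁻¹` of `F(q)`: the unique `F`-algebra map sending `q` to `q⁻¹`. -/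
def qinv : RatFunc F →ₐ[F] RatFunc F :=
  IsFractionRing.liftAlgHom (aeval_inv_injective F)

/-- Coefficient of `qⁿ` in the Laurent-series expansion at `q = 0`, as an `F`-linear map. -/
def coeffL (n : ℤ) : RatFunc F →ₗ[F] F where
  toFun h := ((h : LaurentSeries F)).coeff n
  map_add' a b := by
    rw [map_add, HahnSeries.coeff_add]
  map_smul' c a := by
    rw [RatFunc.smul_eq_C_mul, map_mul, ← RatFunc.algebraMap_C, ← IsScalarTower.algebraMap_apply]
    simp

/-- `Res_{q=0} (h dq)`: the coefficient of `q⁻¹` in the Laurent expansion of `h` at `q = 0`. -/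
def res0 (h : RatFunc F) : F := coeffL F (-1) h

/-- `Res_{q=∞} (h dq) := −Res_{q=0} (q⁻² h(q⁻¹) dq)`. -/
def resInf (h : RatFunc F) : F := - res0 F ((RatFunc.X)⁻¹ ^ 2 * qinv F h)

variable (V : Type*) [AddCommGroup V] [Module F V]

/-- The loop space `K := F(q) ⊗_F V` of `V`-valued rational functions. -/
abbrev LoopK := RatFunc F ⊗[F] V

/-- `f(q) ↦ f(q⁻¹)` on `K`. -/
def finv : LoopK F V →ₗ[F] LoopK F V := LinearMap.rTensor V (qinv F).toLinearMap

/-- The `V`-valued coefficient of `qⁿ` in the expansion at `q = 0` of an element of `K`. -/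
def vcoeff (n : ℤ) : LoopK F V →ₗ[F] V :=
  (TensorProduct.lid F V).toLinearMap ∘ₗ LinearMap.rTensor V (coeffL F n)

/-- The loop-space form
`Ω(f,g) = −Res_{q=0}(q⁻¹ B_q(f(q⁻¹),g(q)) dq) − Res_{q=∞}(q⁻¹ B_q(f(q⁻¹),g(q)) dq)`. -/
def Omega (B : LinearMap.BilinForm F V) (f g : LoopK F V) : F :=
  - res0 F ((RatFunc.X)⁻¹ * (LinearMap.BilinForm.baseChange (RatFunc F) B) (finv F V f) g)
  - resInf F ((RatFunc.X)⁻¹ * (LinearMap.BilinForm.baseChange (RatFunc F) B) (finv F V f) g)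

/-- `K₊`: `V`-valued Laurent polynomials in `q`. -/
def Kplus : Submodule F (LoopK F V) :=
  Submodule.span F {z : LoopK F V | ∃ (n : ℤ) (v : V), z = (RatFunc.X ^ n) ⊗ₜ[F] v}

/-- `K₋`: `V`-valued rational functions regular at `q = 0` and vanishing at `q = ∞`. -/
def Kminus : Submodule F (LoopK F V) where
  carrier := {f | (∀ n : ℤ, n < 0 → vcoeff F V n f = 0) ∧
    (∀ n : ℤ, n ≤ 0 → vcoeff F V n (finv F V f) = 0)}
  add_mem' := by
    rintro a b ⟨ha1, ha2⟩ ⟨hb1, hb2⟩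
    constructor
    · intro n hn; rw [map_add, ha1 n hn, hb1 n hn, add_zero]
    · intro n hn; rw [map_add, map_add, ha2 n hn, hb2 n hn, add_zero]
  zero_mem' := by
    constructor <;> intro n hn <;> simp
  smul_mem' := by
    rintro c a ⟨ha1, ha2⟩
    constructor
    · intro n hn; rw [map_smul, ha1 n hn, smul_zero]
    · intro n hn; rw [map_smul, map_smul, ha2 n hn, smul_zero]

/-- The value at `q = 1` of a `V`-valued Laurent polynomial (the sum of its coefficients). -/
def evalOne (f : LoopK F V) : V := ∑ᶠ n : ℤ, vcoeff F V n f

/-- Scalar `K₊ ⊂ F(q)`: the Laurent polynomials. -/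
def KplusS : Submodule F (RatFunc F) :=
  Submodule.span F (Set.range fun n : ℤ => (RatFunc.X : RatFunc F) ^ n)

/-- Scalar `K₋ ⊂ F(q)`: rational functions regular at `q = 0` and vanishing at `q = ∞`. -/
def KminusS : Submodule F (RatFunc F) where
  carrier := {h | (∀ n : ℤ, n < 0 → coeffL F n h = 0) ∧
    (∀ n : ℤ, n ≤ 0 → coeffL F n (qinv F h) = 0)}
  add_mem' := by
    rintro a b ⟨ha1, ha2⟩ ⟨hb1, hb2⟩
    constructor
    · intro n hn; rw [map_add, ha1 n hn, hb1 n hn, add_zero]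
    · intro n hn; rw [map_add, map_add, ha2 n hn, hb2 n hn, add_zero]
  zero_mem' := by
    constructor <;> intro n hn <;> simp
  smul_mem' := by
    rintro c a ⟨ha1, ha2⟩
    constructor
    · intro n hn; rw [map_smul, ha1 n hn, smul_zero]
    · intro n hn; rw [map_smul, map_smul, ha2 n hn, smul_zero]

theorem Module.Basis.repr_lid_rTensor {R A M ι : Type*} [CommSemiring R] [Semiring A]
    [Algebra R A] [AddCommMonoid M] [Module R M] (b : Module.Basis ι R M) (φ : A →ₗ[R] R)
    (x : A ⊗[R] M) (i : ι) :
    b.repr (TensorProduct.lid R M (φ.rTensor M x)) i = φ ((b.baseChange A).repr x i) := by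
  induction x using TensorProduct.induction_on with
  | zero => simp
  | tmul a m => simp [Module.Basis.baseChange_repr_tmul, mul_comm]
  | add x y hx hy => simp only [map_add, Finsupp.add_apply, hx, hy]

section RationalFunctions

variable {F}

open RatFunc
open scoped LaurentSeries PowerSeries

lemma qinv_X : qinv F X = X⁻¹ := by
  have h := IsFractionRing.liftAlgHom_apply (K := RatFunc F) (aeval_inv_injective F)
    (algebraMap (Polynomial F) (RatFunc F) Polynomial.X)
  rw [IsFractionRing.lift_algebraMap, algebraMap_X] at h
  exact h.trans (Polynomial.aeval_X _)

lemma qinv_inv_one_sub_X : qinv F (1 - X)⁻¹ = 1 - (1 - X)⁻¹ := by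
  have hX : (X : RatFunc F) ≠ 0 := X_ne_zero
  have hX1 : (X - 1 : RatFunc F) ≠ 0 := by
    rw [← algebraMap_X, ← map_one (algebraMap (Polynomial F) (RatFunc F)), ← map_sub,
      ← Polynomial.C_1]
    exact (map_ne_zero_iff _ (algebraMap_injective F)).mpr (Polynomial.X_sub_C_ne_zero 1)
  have h1X : (1 - X : RatFunc F) ≠ 0 := by rwa [← neg_ne_zero, neg_sub]
  rw [map_inv₀, map_sub, map_one, qinv_X]
  field_simp
  ring

lemma coeffL_apply (n : ℤ) (h : RatFunc F) : coeffL F n h = (h : F⸨X⸩).coeff n := rfl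

lemma eq_zero_of_forall_coeffL_eq_zero {h : RatFunc F} (hh : ∀ n, coeffL F n h = 0) : h = 0 :=
  (algebraMap (RatFunc F) F⸨X⸩).injective <| by
    ext n
    simpa [coeffL_apply] using hh n

lemma coeffL_X_inv_mul (n : ℤ) (h : RatFunc F) :
    coeffL F n (X⁻¹ * h) = coeffL F (n + 1) h := by
  have hX : ((X⁻¹ : RatFunc F) : F⸨X⸩) = HahnSeries.single (-1) 1 := by
    rw [map_inv₀, coe_X]
    refine inv_eq_of_mul_eq_one_left ?_
    rw [HahnSeries.single_mul_single, neg_add_cancel, one_mul, HahnSeries.single_zero_one]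
  rw [coeffL_apply, map_mul, hX, show n = n + 1 + -1 by ring, HahnSeries.coeff_single_mul_add,
    one_mul, add_neg_cancel_right, coeffL_apply]

lemma coeffL_inv_one_sub_X (n : ℤ) : coeffL F n (1 - X)⁻¹ = if n < 0 then 0 else 1 := by
  have hmk : (((1 - X)⁻¹ : RatFunc F) : F⸨X⸩) = (PowerSeries.mk 1 : F⟦X⟧) := by
    rw [map_inv₀]
    refine inv_eq_of_mul_eq_one_left ?_
    rw [map_sub, map_one, coe_X, ← HahnSeries.ofPowerSeries_X,
      ← map_one (HahnSeries.ofPowerSeries ℤ F), ← map_sub, ← map_mul,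
      PowerSeries.mk_one_mul_one_sub_eq_one, map_one]
  rw [coeffL_apply, hmk, PowerSeries.coeff_coe]
  split_ifs <;> simp

lemma res0_X_inv_mul (h : RatFunc F) : res0 F (X⁻¹ * h) = coeffL F 0 h := by
  rw [res0, coeffL_X_inv_mul, neg_add_cancel]

lemma resInf_X_inv_mul (h : RatFunc F) : resInf F (X⁻¹ * h) = -coeffL F 0 (qinv F h) := by
  have hX : (X⁻¹ : RatFunc F) ^ 2 * (X * qinv F h) = X⁻¹ * qinv F h := by field_simp
  rw [resInf, map_mul, map_inv₀, qinv_X, inv_inv, hX, res0_X_inv_mul]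

end RationalFunctions

section LoopSpace

variable {F V} (B : LinearMap.BilinForm F V)

lemma Omega_eq_coeffL_zero_sub (f g : LoopK F V) :
    Omega F V B f g = coeffL F 0 (qinv F (B.baseChange (RatFunc F) (finv F V f) g))
      - coeffL F 0 (B.baseChange (RatFunc F) (finv F V f) g) := by
  rw [Omega, res0_X_inv_mul, resInf_X_inv_mul]
  ring

lemma baseChange_finv_tmul (f : LoopK F V) (s : RatFunc F) (w : V) :
    B.baseChange (RatFunc F) (finv F V f) (s ⊗ₜ w)
      = qinv F (B.baseChange (RatFunc F) f (1 ⊗ₜ w)) * s := by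
  induction f using TensorProduct.induction_on with
  | zero => simp
  | tmul r v =>
    rw [finv, LinearMap.rTensor_tmul, AlgHom.toLinearMap_apply,
      LinearMap.BilinForm.baseChange_tmul, LinearMap.BilinForm.baseChange_tmul,
      Algebra.smul_def, Algebra.smul_def, map_mul, AlgHom.commutes, mul_one]
    ring
  | add x y hx hy => simp only [map_add, LinearMap.add_apply, hx, hy, add_mul]

lemma coeffL_baseChange_one_tmul (n : ℤ) (f : LoopK F V) (w : V) :
    coeffL F n (B.baseChange (RatFunc F) f (1 ⊗ₜ w)) = B (vcoeff F V n f) w := by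
  induction f using TensorProduct.induction_on with
  | zero => simp
  | tmul r v => simp [vcoeff, LinearMap.BilinForm.baseChange_tmul, mul_comm]
  | add x y hx hy => simp only [map_add, LinearMap.add_apply, hx, hy]

lemma baseChange_one_tmul_eq_zero_of_forall_Omega_eq_zero {f : LoopK F V}
    (hf : ∀ g, Omega F V B f g = 0) (w : V) : B.baseChange (RatFunc F) f (1 ⊗ₜ w) = 0 := by
  by_contra hc
  set c := B.baseChange (RatFunc F) f (1 ⊗ₜ w)
  have hg := hf (((qinv F c)⁻¹ * (1 - RatFunc.X)⁻¹) ⊗ₜ w)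
  rw [Omega_eq_coeffL_zero_sub, baseChange_finv_tmul, mul_inv_cancel_left₀ (by simpa using hc),
    qinv_inv_one_sub_X, map_sub, coeffL_inv_one_sub_X] at hg
  simp [coeffL_apply] at hg

lemma eq_zero_of_forall_vcoeff_eq_zero {f : LoopK F V} (hf : ∀ n, vcoeff F V n f = 0) :
    f = 0 := by
  let b := Module.Basis.ofVectorSpace F V
  refine (b.baseChange (RatFunc F)).repr.injective ?_
  ext i
  refine eq_zero_of_forall_coeffL_eq_zero fun n => ?_
  rw [← Module.Basis.repr_lid_rTensor]
  change b.repr (vcoeff F V n f) i = 0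
  rw [hf n, map_zero, Finsupp.zero_apply]

end LoopSpace

theorem Omega_nondegenerate (B : LinearMap.BilinForm F V)
    (hnd : ∀ v : V, (∀ w : V, B v w = 0) → v = 0) :
    ∀ f : LoopK F V, (∀ g : LoopK F V, Omega F V B f g = 0) → f = 0 := by
  intro f hf
  refine eq_zero_of_forall_vcoeff_eq_zero fun n => hnd _ fun w => ?_
  rw [← coeffL_baseChange_one_tmul, baseChange_one_tmul_eq_zero_of_forall_Omega_eq_zero B hf,
    map_zero]

end
end

section
/- Let R = ℚ[[Q]] be the ring of formal power series (the Novikov ring), m = (Q) its maximal ideal, and for each integer k ≥ 1 let Ψᵏ : R → R be the ℚ-algebra endomorphism determined by substituting Q ↦ Qᵏ (so Ψᵏ(Σ aₙ Qⁿ) = Σ aₙ Qᵏⁿ, and Ψ¹ = id). Then: (a) for every t ∈ m the family (Ψᵏ(t)/k²)_{k≥1} is summable in the Q-adic topology, with sum lying in m; and (b) the resulting map m → m, t ↦ Σ_{k≥1} Ψᵏ(t)/k², is a bijection. -/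
/-!
For `m ≥ 1` the `m`-th coefficient of `Σ_{k≥1} Ψᵏ(t)/k²` is `Σ_{k ∣ m} t_{m/k}/k²`. Identifying
`t ∈ m` with the arithmetic function `n ↦ tₙ` (which vanishes at `0`), the map is therefore
Dirichlet convolution with `k ↦ 1/k²`. That function takes the value `1` at `1`, so it is a unit
of the ring of arithmetic functions and convolution with it is bijective. Summability is the
observation that `Ψᵏ(t) ∈ mᵏ` whenever `t ∈ m`.
-/

noncomputable section

/-- The Adams operation `Ψᵏ` on the Novikov ring `ℚ[[Q]]`: substitution `Q ↦ Qᵏ`,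
defined coefficientwise by `Ψᵏ(Σ aₙ Qⁿ) = Σ aₙ Qᵏⁿ`. -/
def adams (k : ℕ) (f : PowerSeries ℚ) : PowerSeries ℚ :=
  PowerSeries.mk fun n => if k ∣ n then PowerSeries.coeff (n / k) f else 0

/-- The `k`-th term `Ψᵏ(t)/k²` of the series. -/
def adamsTerm (t : PowerSeries ℚ) (k : ℕ) : PowerSeries ℚ :=
  (((k : ℚ) ^ 2)⁻¹) • adams k t

/-- The sum `Σ_{k≥1} Ψᵏ(t)/k²`, computed coefficientwise (each coefficient is given by a
finite sum whenever the family is summable in the `Q`-adic sense). -/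
def adamsSum (t : PowerSeries ℚ) : PowerSeries ℚ :=
  PowerSeries.mk fun m => ∑ᶠ k : ℕ, if 1 ≤ k then PowerSeries.coeff m (adamsTerm t k) else 0

/-- The maximal ideal `m = (Q)` of the Novikov ring `ℚ[[Q]]`. -/
def novikovIdeal : Ideal (PowerSeries ℚ) := Ideal.span {PowerSeries.X}

/-!
For `m ≥ 1` the `m`-th coefficient of `Σ_{k≥1} Ψᵏ(t)/k²` is `Σ_{k ∣ m} t_{m/k}/k²`. Identifying
`t ∈ m` with the arithmetic function `n ↦ tₙ` (which vanishes at `0`), the map is therefore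
Dirichlet convolution with `k ↦ 1/k²`. That function takes the value `1` at `1`, so it is a unit
of the ring of arithmetic functions and convolution with it is bijective. Summability is the
observation that `Ψᵏ(t) ∈ mᵏ` whenever `t ∈ m`.
-/

open PowerSeries ArithmeticFunction

namespace ArithmeticFunction

variable {R : Type*}

def toPowerSeries [Zero R] (f : ArithmeticFunction R) : PowerSeries R :=
  PowerSeries.mk f

@[simp]
lemma coeff_toPowerSeries [Semiring R] (f : ArithmeticFunction R) (n : ℕ) :
    coeff n f.toPowerSeries = f n :=
  coeff_mk n f

lemma toPowerSeries_injective [Semiring R] :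
    Function.Injective (toPowerSeries : ArithmeticFunction R → PowerSeries R) :=
  fun f g h => ext fun n => by rw [← coeff_toPowerSeries, h, coeff_toPowerSeries]

lemma range_toPowerSeries [CommSemiring R] :
    Set.range (toPowerSeries : ArithmeticFunction R → PowerSeries R) =
      ((Ideal.span {X} : Ideal (PowerSeries R)) : Set (PowerSeries R)) := by
  ext t
  simp only [SetLike.mem_coe, Ideal.mem_span_singleton, X_dvd_iff, Set.mem_range]
  constructor
  · rintro ⟨f, rfl⟩
    rw [← coeff_zero_eq_constantCoeff_apply, coeff_toPowerSeries, map_zero]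
  · intro ht
    refine ⟨⟨fun n => coeff n t, by rwa [coeff_zero_eq_constantCoeff_apply]⟩, ?_⟩
    ext n
    exact coeff_toPowerSeries _ n

end ArithmeticFunction

def inverseSquare : ArithmeticFunction ℚ :=
  ⟨fun k => ((k : ℚ) ^ 2)⁻¹, by simp⟩

lemma inverseSquare_apply (k : ℕ) : inverseSquare k = ((k : ℚ) ^ 2)⁻¹ := rfl

lemma isUnit_inverseSquare : IsUnit inverseSquare :=
  isUnit_iff_isUnit_apply_one.2 (by simp [inverseSquare_apply])

lemma coeff_adamsTerm (t : PowerSeries ℚ) (k n : ℕ) :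
    coeff n (adamsTerm t k) = if k ∣ n then ((k : ℚ) ^ 2)⁻¹ * coeff (n / k) t else 0 := by
  simp only [adamsTerm, adams, coeff_smul, coeff_mk, smul_eq_mul, mul_ite, mul_zero]

lemma mem_novikovIdeal_pow_iff {f : PowerSeries ℚ} {n : ℕ} :
    f ∈ novikovIdeal ^ n ↔ ∀ i < n, coeff i f = 0 := by
  rw [novikovIdeal, Ideal.span_singleton_pow, Ideal.mem_span_singleton, X_pow_dvd_iff]

lemma adamsTerm_mem_novikovIdeal_pow {t : PowerSeries ℚ} (ht : t ∈ novikovIdeal) (k : ℕ) :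
    adamsTerm t k ∈ novikovIdeal ^ k := by
  have ht0 : coeff 0 t = 0 := mem_novikovIdeal_pow_iff.1 (by rwa [pow_one]) 0 one_pos
  refine mem_novikovIdeal_pow_iff.2 fun i hi => ?_
  rw [coeff_adamsTerm]
  split_ifs with hdvd
  · rw [Nat.eq_zero_of_dvd_of_lt hdvd hi, Nat.zero_div, ht0, mul_zero]
  · rfl

lemma adamsSum_toPowerSeries (f : ArithmeticFunction ℚ) :
    adamsSum f.toPowerSeries = (inverseSquare * f).toPowerSeries := by
  ext n
  -- dropping `1 ≤ k` is harmless: `inverseSquare 0 = (0 ^ 2)⁻¹ = 0` in `ℚ`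
  have hterm (k : ℕ) : (if 1 ≤ k then coeff n (adamsTerm f.toPowerSeries k) else 0) =
      if k ∣ n then inverseSquare k * f (n / k) else 0 := by
    rcases k.eq_zero_or_pos with rfl | hk
    · simp
    · simp [Nat.one_le_iff_ne_zero.2 hk.ne', coeff_adamsTerm, inverseSquare_apply]
  have hsupp : Function.support (fun k => if k ∣ n then inverseSquare k * f (n / k) else 0) ⊆
      n.divisors := by
    intro k hk
    have hdvd : k ∣ n := by_contra fun h => hk (if_neg h)
    rw [Function.mem_support, if_pos hdvd] at hk
    refine Finset.mem_coe.2 (Nat.mem_divisors.2 ⟨hdvd, ?_⟩)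
    rintro rfl
    simp at hk
  rw [adamsSum, coeff_mk, finsum_congr hterm, finsum_eq_sum_of_support_subset _ hsupp,
    coeff_toPowerSeries, mul_apply, Nat.sum_divisorsAntidiagonal fun a b => inverseSquare a * f b]
  exact Finset.sum_congr rfl fun k hk => if_pos (Nat.dvd_of_mem_divisors hk)

/-- (a) for `t ∈ m` the family `(Ψᵏ(t)/k²)_{k≥1}` is summable in the `Q`-adic
topology (for every `n`, all but finitely many terms lie in `(Q)ⁿ = mⁿ`), with sum in `m`;
and (b) the map `m → m`, `t ↦ Σ_{k≥1} Ψᵏ(t)/k²`, is a bijection. -/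
theorem adamsSum_bijOn :
    (∀ t ∈ novikovIdeal,
      (∀ n : ℕ, {k : ℕ | 1 ≤ k ∧ adamsTerm t k ∉ novikovIdeal ^ n}.Finite) ∧
      adamsSum t ∈ novikovIdeal) ∧
    Set.BijOn adamsSum (novikovIdeal : Set (PowerSeries ℚ)) (novikovIdeal : Set (PowerSeries ℚ)) := by
  have hbij : Set.BijOn adamsSum (novikovIdeal : Set (PowerSeries ℚ)) novikovIdeal := by
    rw [novikovIdeal, ← range_toPowerSeries]
    exact Function.Semiconj.bijOn_range (fun f => (adamsSum_toPowerSeries f).symm)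
      (IsUnit.isUnit_iff_mulLeft_bijective.1 isUnit_inverseSquare) toPowerSeries_injective
  refine ⟨fun t ht => ⟨fun n => (Set.finite_Iio n).subset ?_, hbij.mapsTo ht⟩, hbij⟩
  exact fun k ⟨_, hk⟩ => not_le.1 fun hnk =>
    hk (Ideal.pow_le_pow_right hnk (adamsTerm_mem_novikovIdeal_pow ht k))

end
end
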